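/- If δ is a complex number with |δ| ≤ 2^{−28}, then |j(2i+δ) − j(2i) − j'(2i)·δ| ≤ 0.2·|δ| and |j(i√3+δ) − j(i√3) − j'(i√3)·δ| ≤ 0.2·|δ|. -/

import Mathlib

open Complex Real Filter

/-- The normalized Eisenstein series `E₄`, via its `q`-expansion
`E₄(τ) = 1 + 240 ∑_{n≥1} σ₃(n) qⁿ`, `q = exp(2πiτ)`. -/
noncomputable def E4 (τ : ℂ) : ℂ :=
  1 + 240 * ∑' n : ℕ, (∑ d ∈ (n + 1).divisors, (d : ℂ) ^ 3) *
    Complex.exp (2 * Real.pi * Complex.I * τ) ^ (n + 1)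

/-- The normalized Eisenstein series `E₆`, via its `q`-expansion
`E₆(τ) = 1 - 504 ∑_{n≥1} σ₅(n) qⁿ`, `q = exp(2πiτ)`. -/
noncomputable def E6 (τ : ℂ) : ℂ :=
  1 - 504 * ∑' n : ℕ, (∑ d ∈ (n + 1).divisors, (d : ℂ) ^ 5) *
    Complex.exp (2 * Real.pi * Complex.I * τ) ^ (n + 1)

/-- The Klein `j`-invariant, `j = 1728 E₄³ / (E₄³ - E₆²)`. -/
noncomputable def klj (τ : ℂ) : ℂ := 1728 * E4 τ ^ 3 / (E4 τ ^ 3 - E6 τ ^ 2)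

/-- The usual fundamental domain `F` of the modular group:
`{z : -1/2 < Re z ≤ 1/2, |z| > 1} ∪ {z : |z| = 1, Re z ≥ 0}` (inside the upper half-plane). -/
def Fdom : Set ℂ :=
  {z | 0 < z.im ∧ ((-1/2 < z.re ∧ z.re ≤ 1/2 ∧ 1 < ‖z‖) ∨
    (‖z‖ = 1 ∧ 0 ≤ z.re))}

/-- The level-2 modular polynomial `Φ₂(X,Y)`. -/
def Phi2 (X Y : ℂ) : ℂ :=
  X ^ 3 + Y ^ 3 - X ^ 2 * Y ^ 2 + 1488 * X ^ 2 * Y + 1488 * X * Y ^ 2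
    - 162000 * X ^ 2 - 162000 * Y ^ 2 + 40773375 * X * Y
    + 8748000000 * X + 8748000000 * Y - 157464000000000

/-!
The function `j` is holomorphic near `2i` and `i√3`, so the Cauchy estimates on a circle of
radius `R = 1/4` bound the Taylor remainder by `M (|δ|/R)² / (1 - |δ|/R)`, where `M` bounds `|j|`
on the circle. For `Im τ ≥ 1.48` the nome `q = e^{2πiτ}` satisfies `|q| ≤ 10⁻⁴`; since
`σ_k(n) ≤ 2^{(k+1)n}`, the tails of the `q`-expansions are geometric and
`E₄ = 1 + 240q + O(q²)`, `E₆ = 1 - 504q + O(q²)`. Hence `E₄³ - E₆² = 1728q + O(q²)` stays away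
from zero, `|j| = O(1/|q|) ≤ 2.5·10⁶` for `Im τ ≤ 2.25`, and for `|δ| ≤ 2⁻²⁸` the remainder is
far below `0.2|δ|`.
-/

open Metric NNReal

theorem norm_cauchyPowerSeries_le_of_forall_mem_sphere_norm_le {E : Type*}
    [NormedAddCommGroup E] [NormedSpace ℂ E] {f : ℂ → E} {c : ℂ} {R M : ℝ} (hR : 0 < R)
    (hM : ∀ z ∈ sphere c R, ‖f z‖ ≤ M) (n : ℕ) :
    ‖cauchyPowerSeries f c R n‖ ≤ M * R⁻¹ ^ n := by
  refine (norm_cauchyPowerSeries_le f c R n).trans ?_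
  rw [abs_of_pos hR]
  gcongr
  have hint := intervalIntegral.norm_integral_le_of_norm_le_const (a := 0) (b := 2 * π)
    (f := fun θ => ‖f (circleMap c R θ)‖) (C := M)
    fun θ _ => by simpa using hM _ (circleMap_mem_sphere c hR.le θ)
  rw [sub_zero, abs_of_pos two_pi_pos] at hint
  calc (2 * π)⁻¹ * ∫ θ in 0..2 * π, ‖f (circleMap c R θ)‖
      ≤ (2 * π)⁻¹ * (M * (2 * π)) := by gcongr; exact (le_abs_self _).trans (by simpa using hint)
    _ = M := by field_simp

theorem norm_sub_sub_smul_deriv_le_of_forall_mem_sphere_norm_le {E : Type*}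
    [NormedAddCommGroup E] [NormedSpace ℂ E] [CompleteSpace E] {f : ℂ → E} {c δ : ℂ} {R : ℝ≥0}
    {M : ℝ} (hR : 0 < R) (hf : DifferentiableOn ℂ f (closedBall c R))
    (hM : ∀ z ∈ sphere c R, ‖f z‖ ≤ M) (hδ : ‖δ‖ < R) :
    ‖f (c + δ) - f c - δ • deriv f c‖ ≤ M * (‖δ‖ / R) ^ 2 / (1 - ‖δ‖ / R) := by
  set p := cauchyPowerSeries f c R
  have hp : HasFPowerSeriesOnBall f p c R := hf.hasFPowerSeriesOnBall hR
  have hδ' : δ ∈ eball (0 : ℂ) R := by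
    rw [mem_eball, edist_zero_right]; exact_mod_cast hδ
  have hsum : HasSum (fun n => δ ^ (n + 2) • p.coeff (n + 2))
      (f (c + δ) - f c - δ • deriv f c) := by
    have h := hp.hasSum hδ'
    simp only [FormalMultilinearSeries.apply_eq_pow_smul_coeff] at h
    convert (hasSum_nat_add_iff' 2).mpr h using 1
    rw [sub_sub, Finset.sum_range_succ, Finset.sum_range_one,
      show p.coeff 0 = f c from hp.coeff_zero 1, show p.coeff 1 = deriv f c from hp.hasFPowerSeriesAt.deriv.symm,
      pow_zero, one_smul, pow_one]
  set x := ‖δ‖ / R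
  have hx : x < 1 := (div_lt_one (by exact_mod_cast hR)).mpr hδ
  have hgeom : HasSum (fun n => M * x ^ 2 * x ^ n) (M * x ^ 2 / (1 - x)) := by
    simpa [div_eq_mul_inv] using
      (hasSum_geometric_of_lt_one (by positivity) hx).mul_left (M * x ^ 2)
  refine tsum_of_norm_bounded hgeom (fun n => ?_) |>.trans_eq' (congrArg norm hsum.tsum_eq)
  rw [norm_smul, norm_pow, ← FormalMultilinearSeries.norm_apply_eq_norm_coef]
  calc ‖δ‖ ^ (n + 2) * ‖p (n + 2)‖ ≤ ‖δ‖ ^ (n + 2) * (M * (R : ℝ)⁻¹ ^ (n + 2)) := by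
        gcongr
        exact norm_cauchyPowerSeries_le_of_forall_mem_sphere_norm_le (by exact_mod_cast hR) hM _
    _ = M * x ^ 2 * x ^ n := by simp only [x, div_eq_mul_inv, mul_pow]; ring

theorem norm_sum_divisors_pow_le (k m : ℕ) :
    ‖∑ d ∈ m.divisors, (d : ℂ) ^ k‖ ≤ ((2 : ℝ) ^ (k + 1)) ^ m := by
  have hσ : ∑ d ∈ m.divisors, (d : ℂ) ^ k = (ArithmeticFunction.sigma k m : ℂ) := by
    simp [ArithmeticFunction.sigma_apply]
  rw [hσ, Complex.norm_natCast, ← pow_mul, mul_comm, pow_mul]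
  exact_mod_cast (ArithmeticFunction.sigma_le_pow_succ k m).trans
    (Nat.pow_le_pow_left (Nat.lt_two_pow_self).le _)

noncomputable def sigmaSeries (k : ℕ) (w : ℂ) : ℂ :=
  ∑' n : ℕ, (∑ d ∈ (n + 1).divisors, (d : ℂ) ^ k) * w ^ (n + 1)

theorem norm_sigmaSeries_term_le (k n : ℕ) (w : ℂ) :
    ‖(∑ d ∈ (n + 1).divisors, (d : ℂ) ^ k) * w ^ (n + 1)‖ ≤ (2 ^ (k + 1) * ‖w‖) ^ (n + 1) := by
  rw [norm_mul, norm_pow, mul_pow]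
  gcongr
  exact norm_sum_divisors_pow_le k (n + 1)

theorem differentiableOn_sigmaSeries (k : ℕ) {ρ : ℝ} (hρ : 2 ^ (k + 1) * ρ < 1) :
    DifferentiableOn ℂ (sigmaSeries k) (ball 0 ρ) := by
  rcases le_or_gt ρ 0 with hρ0 | hρ0
  · simp only [ball_eq_empty.mpr hρ0, differentiableOn_empty]
  have hu := (summable_geometric_of_lt_one (by positivity) hρ).mul_left (2 ^ (k + 1) * ρ)
  refine differentiableOn_tsum_of_summable_norm (hu.congr fun n => (pow_succ' _ n).symm)
    (fun n => by fun_prop) isOpen_ball fun n w hw => ?_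
  refine (norm_sigmaSeries_term_le k n w).trans ?_
  gcongr
  exact (mem_ball_zero_iff.mp hw).le

theorem norm_sigmaSeries_sub_self_le (k : ℕ) {w : ℂ} (hw : 2 ^ (k + 1) * ‖w‖ < 1) :
    ‖sigmaSeries k w - w‖ ≤ (2 ^ (k + 1) * ‖w‖) ^ 2 / (1 - 2 ^ (k + 1) * ‖w‖) := by
  set x := 2 ^ (k + 1) * ‖w‖
  have hgeom := hasSum_geometric_of_lt_one (by positivity) hw
  have hsum : Summable fun n : ℕ => (∑ d ∈ (n + 1).divisors, (d : ℂ) ^ k) * w ^ (n + 1) :=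
    .of_norm_bounded (hgeom.summable.mul_left x |>.congr fun n => (pow_succ' x n).symm)
      (norm_sigmaSeries_term_le k · w)
  rw [sigmaSeries, hsum.tsum_eq_zero_add]
  simp only [zero_add, Nat.divisors_one, Finset.sum_singleton, Nat.cast_one, one_pow, one_mul,
    pow_one, add_sub_cancel_left]
  refine tsum_of_norm_bounded (by simpa [div_eq_mul_inv] using hgeom.mul_left (x ^ 2)) fun n => ?_
  exact (norm_sigmaSeries_term_le k (n + 1) w).trans_eq (by ring)

theorem norm_cube_sub_sq_ge {w s t : ℂ} (hw : ‖w‖ ≤ 1e-4) (hs : ‖s - w‖ ≤ 260 * ‖w‖ ^ 2)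
    (ht : ‖t - w‖ ≤ 4200 * ‖w‖ ^ 2) :
    1200 * ‖w‖ ≤ ‖(1 + 240 * s) ^ 3 - (1 - 504 * t) ^ 2‖ := by
  set r := ‖w‖
  have hr : 0 ≤ r := norm_nonneg w
  have hs' : ‖s‖ ≤ 1.03 * r := by
    have := norm_le_norm_add_norm_sub' s w
    nlinarith
  have ht' : ‖t‖ ≤ 1.42 * r := by
    have := norm_le_norm_add_norm_sub' t w
    nlinarith
  -- the linear terms give `(3 * 240 + 2 * 504) * w = 1728 * w`; all of `e` is `O(‖w‖²)`
  set e := 720 * (s - w) + 1008 * (t - w) + 172800 * s ^ 2 + 13824000 * s ^ 3 - 254016 * t ^ 2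
  have hexpand : (1 + 240 * s) ^ 3 - (1 - 504 * t) ^ 2 = 1728 * w + e := by ring
  have he : ‖e‖ ≤ 528 * r := by
    have hnorm : ‖e‖ ≤ 720 * ‖s - w‖ + 1008 * ‖t - w‖ + 172800 * ‖s‖ ^ 2 + 13824000 * ‖s‖ ^ 3
        + 254016 * ‖t‖ ^ 2 := by
      refine (norm_sub_le _ _).trans (add_le_add (norm_add₄_le.trans_eq ?_) ?_) <;>
        simp [norm_pow]
    have h2 : ‖s‖ ^ 2 ≤ (1.03 * r) ^ 2 := by gcongr
    have h3 : ‖s‖ ^ 3 ≤ (1.03 * r) ^ 3 := by gcongr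
    have h4 : ‖t‖ ^ 2 ≤ (1.42 * r) ^ 2 := by gcongr
    nlinarith [mul_le_mul_of_nonneg_left hw (sq_nonneg r)]
  have := norm_sub_norm_le (1728 * w) (-e)
  rw [hexpand]
  simp only [norm_mul, norm_neg, sub_neg_eq_add] at this
  norm_num at this
  linarith

theorem norm_sigmaSeries_three_sub_self_le {w : ℂ} (hw : ‖w‖ ≤ 1e-4) :
    ‖sigmaSeries 3 w - w‖ ≤ 260 * ‖w‖ ^ 2 := by
  have h := norm_sigmaSeries_sub_self_le 3 (w := w) (by norm_num; linarith)
  norm_num at h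
  refine h.trans ?_
  rw [div_le_iff₀ (by linarith)]
  nlinarith [norm_nonneg w, sq_nonneg ‖w‖]

theorem norm_sigmaSeries_five_sub_self_le {w : ℂ} (hw : ‖w‖ ≤ 1e-4) :
    ‖sigmaSeries 5 w - w‖ ≤ 4200 * ‖w‖ ^ 2 := by
  have h := norm_sigmaSeries_sub_self_le 5 (w := w) (by norm_num; linarith)
  norm_num at h
  refine h.trans ?_
  rw [div_le_iff₀ (by linarith)]
  nlinarith [norm_nonneg w, sq_nonneg ‖w‖]

theorem norm_exp_two_pi_I_mul (τ : ℂ) :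
    ‖cexp (2 * π * I * τ)‖ = (Real.exp (2 * π * τ.im))⁻¹ := by
  rw [Complex.norm_exp, ← Real.exp_neg]
  congr 1
  simp

theorem exp_two_pi_mul_ge {t : ℝ} (ht : 1.48 ≤ t) : 10000 ≤ Real.exp (2 * π * t) := by
  have h9 : 2.718 ^ 9 ≤ Real.exp 9 := by
    rw [show (9 : ℝ) = (9 : ℕ) by norm_num, ← Real.exp_one_pow]
    gcongr
    linarith [Real.exp_one_gt_d9]
  calc (10000 : ℝ) ≤ 2.718 ^ 9 * (0.29 + 1) := by norm_num
    _ ≤ Real.exp 9 * Real.exp 0.29 := by gcongr; exact Real.add_one_le_exp _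
    _ ≤ Real.exp (2 * π * t) := by
      rw [← Real.exp_add]; gcongr; nlinarith [Real.pi_gt_d2]

theorem exp_two_pi_mul_le {t : ℝ} (ht : t ≤ 2.25) : Real.exp (2 * π * t) ≤ 1.5e6 := by
  have h14 : Real.exp 14 ≤ 2.719 ^ 14 := by
    rw [show (14 : ℝ) = (14 : ℕ) by norm_num, ← Real.exp_one_pow]
    gcongr
    linarith [Real.exp_one_lt_d9]
  calc Real.exp (2 * π * t) ≤ Real.exp 14 * Real.exp 0.175 := by
        rw [← Real.exp_add]; gcongr; nlinarith [Real.pi_lt_d2, Real.pi_pos]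
    _ ≤ 2.719 ^ 14 * (1 / (1 - 0.175)) := by
        gcongr; exact Real.exp_bound_div_one_sub_of_interval (by norm_num) (by norm_num)
    _ ≤ 1.5e6 := by norm_num

theorem E4_eq_sigmaSeries (τ : ℂ) : E4 τ = 1 + 240 * sigmaSeries 3 (cexp (2 * π * I * τ)) := rfl

theorem E6_eq_sigmaSeries (τ : ℂ) : E6 τ = 1 - 504 * sigmaSeries 5 (cexp (2 * π * I * τ)) := rfl

section UpperHalfPlaneEstimates

variable {τ : ℂ}

theorem norm_exp_two_pi_I_mul_le (hτ : 1.48 ≤ τ.im) : ‖cexp (2 * π * I * τ)‖ ≤ 1e-4 := by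
  rw [norm_exp_two_pi_I_mul, inv_le_comm₀ (Real.exp_pos _) (by norm_num)]
  exact le_of_eq_of_le (by norm_num) (exp_two_pi_mul_ge hτ)

theorem norm_E4_cube_sub_E6_sq_ge (hτ : 1.48 ≤ τ.im) :
    1200 * ‖cexp (2 * π * I * τ)‖ ≤ ‖E4 τ ^ 3 - E6 τ ^ 2‖ :=
  have hq := norm_exp_two_pi_I_mul_le hτ
  norm_cube_sub_sq_ge hq (norm_sigmaSeries_three_sub_self_le hq)
    (norm_sigmaSeries_five_sub_self_le hq)

theorem E4_cube_sub_E6_sq_ne_zero (hτ : 1.48 ≤ τ.im) : E4 τ ^ 3 - E6 τ ^ 2 ≠ 0 := by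
  refine norm_pos_iff.mp (lt_of_lt_of_le ?_ (norm_E4_cube_sub_E6_sq_ge hτ))
  have := norm_pos_iff.mpr (Complex.exp_ne_zero (2 * π * I * τ))
  positivity

theorem norm_E4_le (hτ : 1.48 ≤ τ.im) : ‖E4 τ‖ ≤ 1.03 := by
  have hq := norm_exp_two_pi_I_mul_le hτ
  have hs := norm_sigmaSeries_three_sub_self_le hq
  have := norm_le_norm_add_norm_sub' (sigmaSeries 3 (cexp (2 * π * I * τ))) (cexp (2 * π * I * τ))
  rw [E4_eq_sigmaSeries]
  refine (norm_add_le _ _).trans ?_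
  simp only [norm_one, norm_mul, Complex.norm_ofNat]
  nlinarith [norm_nonneg (cexp (2 * π * I * τ))]

theorem norm_klj_le (h₁ : 1.48 ≤ τ.im) (h₂ : τ.im ≤ 2.25) : ‖klj τ‖ ≤ 2.5e6 := by
  have hden := norm_E4_cube_sub_E6_sq_ge h₁
  have hq : ‖cexp (2 * π * I * τ)‖ * 1.5e6 ≥ 1 := by
    rw [norm_exp_two_pi_I_mul, ← div_eq_inv_mul, ge_iff_le, one_le_div (Real.exp_pos _)]
    exact exp_two_pi_mul_le h₂
  have hnum : ‖(1728 : ℂ) * E4 τ ^ 3‖ ≤ 1890 := by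
    rw [norm_mul, norm_pow, Complex.norm_ofNat]
    calc 1728 * ‖E4 τ‖ ^ 3 ≤ 1728 * 1.03 ^ 3 := by gcongr; exact norm_E4_le h₁
      _ ≤ 1890 := by norm_num
  rw [klj, norm_div, div_le_iff₀ (norm_pos_iff.mpr (E4_cube_sub_E6_sq_ne_zero h₁))]
  nlinarith

theorem differentiableAt_klj (hτ : 1.48 ≤ τ.im) : DifferentiableAt ℂ klj τ := by
  have hq : cexp (2 * π * I * τ) ∈ ball (0 : ℂ) 1e-3 :=
    mem_ball_zero_iff.mpr ((norm_exp_two_pi_I_mul_le hτ).trans_lt (by norm_num))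
  have hexp : DifferentiableAt ℂ (fun z : ℂ => cexp (2 * π * I * z)) τ := by fun_prop
  have h4 : DifferentiableAt ℂ E4 τ := by
    have := ((differentiableOn_sigmaSeries 3 (by norm_num)).differentiableAt
      (isOpen_ball.mem_nhds hq)).comp τ hexp
    exact (this.const_mul 240).const_add 1
  have h6 : DifferentiableAt ℂ E6 τ := by
    have := ((differentiableOn_sigmaSeries 5 (by norm_num)).differentiableAt
      (isOpen_ball.mem_nhds hq)).comp τ hexp
    exact (differentiableAt_const 1).sub (this.const_mul 504)
  exact ((h4.pow 3).const_mul 1728).div ((h4.pow 3).sub (h6.pow 2))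
    (E4_cube_sub_E6_sq_ne_zero hτ)

end UpperHalfPlaneEstimates

theorem im_mem_Icc_of_mem_closedBall {c z : ℂ} {R : ℝ} (hz : z ∈ closedBall c R) :
    z.im ∈ Set.Icc (c.im - R) (c.im + R) := by
  have := (abs_im_le_norm (z - c)).trans (mem_closedBall_iff_norm.mp hz)
  rw [sub_im, abs_le] at this
  constructor <;> linarith

theorem norm_klj_sub_sub_deriv_mul_le {c δ : ℂ} (h₁ : 1.73 ≤ c.im) (h₂ : c.im ≤ 2)
    (hδ : ‖δ‖ ≤ 2 ^ (-(28 : ℤ))) :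
    ‖klj (c + δ) - klj c - deriv klj c * δ‖ ≤ 0.2 * ‖δ‖ := by
  have hR : ((4⁻¹ : ℝ≥0) : ℝ) = 4⁻¹ := by norm_num
  have him : ∀ z ∈ closedBall c ((4⁻¹ : ℝ≥0) : ℝ), 1.48 ≤ z.im ∧ z.im ≤ 2.25 := fun z hz => by
    rw [hR] at hz
    have := im_mem_Icc_of_mem_closedBall hz
    constructor <;> linarith [this.1, this.2]
  have hδ' : ‖δ‖ ≤ 268435456⁻¹ := hδ.trans_eq (by norm_num)
  have key := norm_sub_sub_smul_deriv_le_of_forall_mem_sphere_norm_le (f := klj)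
    (δ := δ) (by norm_num)
    (fun z hz => (differentiableAt_klj (him z hz).1).differentiableWithinAt)
    (fun z hz => norm_klj_le (him z (sphere_subset_closedBall hz)).1
      (him z (sphere_subset_closedBall hz)).2)
    (by rw [hR]; linarith)
  rw [smul_eq_mul, mul_comm, hR, div_inv_eq_mul] at key
  refine key.trans ?_
  rw [div_le_iff₀ (by linarith)]
  nlinarith [norm_nonneg δ]

theorem j_linear_taylor_at_2i_and_sqrt3i (δ : ℂ) (hδ : ‖δ‖ ≤ 2 ^ (-(28 : ℤ))) :
    ‖klj (2 * Complex.I + δ) - klj (2 * Complex.I) -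
        deriv klj (2 * Complex.I) * δ‖ ≤ 0.2 * ‖δ‖ ∧
    ‖klj (Complex.I * Real.sqrt 3 + δ) - klj (Complex.I * Real.sqrt 3) -
        deriv klj (Complex.I * Real.sqrt 3) * δ‖ ≤ 0.2 * ‖δ‖ := by
  have hsqrt3 : 1.73 ≤ √3 ∧ √3 ≤ 2 :=
    ⟨Real.le_sqrt_of_sq_le (by norm_num), Real.sqrt_le_iff.mpr ⟨by norm_num, by norm_num⟩⟩
  constructor
  · exact norm_klj_sub_sub_deriv_mul_le (by norm_num) (by norm_num) hδ
  · exact norm_klj_sub_sub_deriv_mul_le (by simpa using hsqrt3.1) (by simpa using hsqrt3.2) hδ
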